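/- arXiv:1807.07054 — 2 statements merged into one kernel-verified Lean document; each statement's English description precedes it below -/
import Mathlib

section
/- Let m > 0 and C₀ > 0. Suppose S is a finite multiset of real numbers in (0,1] such that for every δ > 0, the number of elements of S greater than δ is at most C₀·δ^{-m}. Then ∑_{s∈S} s^m ≤ D₁·(1 + log₂(1 + |S|)) for some constant D₁ depending only on C₀ and m. -/
/-!
List the elements of `S` as `s₁ ≥ s₂ ≥ ⋯ ≥ sₙ`. Every `δ < sₖ` is exceeded by at least `k`
elements, so `k ≤ C₀ δ^{-m}`, and letting `δ → sₖ` gives `sₖ^m ≤ C₀ / k`. Summing, `∑ s^m` is at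
most `C₀` times the harmonic number `Hₙ ≤ 1 + log n`. The bound is proved by induction on `n`,
peeling off the smallest element.
-/

open Filter Topology Real

lemma le_mul_rpow_neg_of_forall_lt {a C m s : ℝ} (hs : 0 < s)
    (h : ∀ δ, 0 < δ → δ < s → a ≤ C * δ ^ (-m)) : a ≤ C * s ^ (-m) := by
  have hcont : ContinuousAt (fun δ : ℝ => C * δ ^ (-m)) s :=
    continuousAt_const.mul (continuousAt_rpow_const s (-m) (Or.inl hs.ne'))
  refine ge_of_tendsto (hcont.tendsto.mono_left (nhdsWithin_le_nhds (s := Set.Iio s))) ?_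
  filter_upwards [eventually_nhdsWithin_of_eventually_nhds (eventually_gt_nhds hs),
    self_mem_nhdsWithin] with δ hδ hδs
  exact h δ hδ hδs

namespace Multiset

variable {S : Multiset ℝ} {C m : ℝ}

lemma card_mul_rpow_le_of_forall_le {s : ℝ} (hs : 0 < s) (hmin : ∀ t ∈ S, s ≤ t)
    (hcount : ∀ δ, 0 < δ → ((S.filter (δ < ·)).card : ℝ) ≤ C * δ ^ (-m)) :
    (S.card : ℝ) * s ^ m ≤ C := by
  have hcard : (S.card : ℝ) ≤ C * s ^ (-m) :=
    le_mul_rpow_neg_of_forall_lt hs fun δ hδ hδs => by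
      simpa [filter_eq_self.2 fun t ht => hδs.trans_le (hmin t ht)] using hcount δ hδ
  calc (S.card : ℝ) * s ^ m ≤ C * s ^ (-m) * s ^ m := by gcongr
    _ = C := by rw [rpow_neg hs.le, mul_assoc, inv_mul_cancel₀ (rpow_pos_of_pos hs m).ne', mul_one]

theorem sum_map_rpow_le_mul_harmonic (hpos : ∀ s ∈ S, 0 < s)
    (hcount : ∀ δ, 0 < δ → ((S.filter (δ < ·)).card : ℝ) ≤ C * δ ^ (-m)) :
    (S.map (· ^ m)).sum ≤ C * harmonic S.card := by
  induction hn : S.card generalizing S with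
  | zero => simp [card_eq_zero.1 hn]
  | succ n ih =>
    obtain ⟨s, hsS, hmin⟩ := S.exists_min_image id (card_pos.1 (by omega))
    have hS : s ::ₘ S.erase s = S := cons_erase hsS
    have hrest : ((S.erase s).map (· ^ m)).sum ≤ C * harmonic n := by
      refine ih (fun t ht => hpos t (mem_of_mem_erase ht)) (fun δ hδ => ?_) ?_
      · refine le_trans ?_ (hcount δ hδ)
        exact_mod_cast card_le_card (filter_le_filter _ (erase_le s S))
      · rw [card_erase_of_mem hsS, hn, Nat.pred_succ]
    have hs : s ^ m ≤ C * (n + 1 : ℝ)⁻¹ := by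
      have hmul : (n + 1 : ℝ) * s ^ m ≤ C := by
        exact_mod_cast hn ▸ card_mul_rpow_le_of_forall_le (hpos s hsS) hmin hcount
      rw [← div_eq_mul_inv, le_div_iff₀ (by positivity)]
      linarith
    rw [← hS, map_cons, sum_cons, harmonic_succ]
    push_cast
    linarith

end Multiset

lemma harmonic_le_one_add_logb_two (n : ℕ) : (harmonic n : ℝ) ≤ 1 + logb 2 (1 + n) := by
  have hlog : log n ≤ log (1 + n) := by
    rcases n.eq_zero_or_pos with rfl | hn
    · simp
    · exact log_le_log (by exact_mod_cast hn) (by linarith)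
  have hlogb : log (1 + n) ≤ logb 2 (1 + n) :=
    le_div_self (log_nonneg (by linarith [n.cast_nonneg (α := ℝ)])) (log_pos one_lt_two)
      (by linarith [log_le_sub_one_of_pos two_pos])
  linarith [harmonic_le_one_add_log n]

theorem stmt_1_general (m C₀ : ℝ) (hC₀ : 0 < C₀) :
    ∃ D₁ : ℝ, 0 < D₁ ∧
      ∀ S : Multiset ℝ,
        (∀ s ∈ S, 0 < s) → (∀ s ∈ S, s ≤ 1) →
        (∀ δ : ℝ, 0 < δ →
          ((S.filter (fun s => δ < s)).card : ℝ) ≤ C₀ * δ ^ (-m)) →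
        (S.map (fun s => s ^ m)).sum ≤ D₁ * (1 + Real.logb 2 (1 + (S.card : ℝ))) := by
  refine ⟨C₀, hC₀, fun S hpos _ hcount => ?_⟩
  calc (S.map (fun s => s ^ m)).sum ≤ C₀ * harmonic S.card :=
        S.sum_map_rpow_le_mul_harmonic hpos hcount
    _ ≤ C₀ * (1 + logb 2 (1 + (S.card : ℝ))) := by
        gcongr
        exact harmonic_le_one_add_logb_two _

theorem stmt_1 (m C₀ : ℝ) (hm : 0 < m) (hC₀ : 0 < C₀) :
    ∃ D₁ : ℝ, 0 < D₁ ∧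
      ∀ S : Multiset ℝ,
        (∀ s ∈ S, 0 < s) → (∀ s ∈ S, s ≤ 1) →
        (∀ δ : ℝ, 0 < δ →
          ((S.filter (fun s => δ < s)).card : ℝ) ≤ C₀ * δ ^ (-m)) →
        (S.map (fun s => s ^ m)).sum ≤ D₁ * (1 + Real.logb 2 (1 + (S.card : ℝ))) :=
  stmt_1_general m C₀ hC₀
end

section
/- Let V be a commutative diagram of vector spaces over a field k with linear maps φ : A → A', ψ : B → B', maps α_b : A → C and β_b : B → C with α_b + β_b : A ⊕ B → C, maps α_d : A' → D and β_d : B' → D with α_d + β_d : A' ⊕ B' → D, and ζ : C → D, such that ζ ∘ (α_b + β_b) = (α_d + β_d) ∘ (φ ⊕ ψ) and α_d + β_d : A' ⊕ B' → D is injective. Then rank(ζ) ≥ rank(φ) + rank(ψ). -/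
universe u

/-- A submodule product is linearly equivalent to the product of submodules. -/
def submoduleProdEquiv {k : Type*} [Field k] {M N : Type*} [AddCommGroup M] [Module k M]
    [AddCommGroup N] [Module k N] (p : Submodule k M) (q : Submodule k N) :
    (p.prod q) ≃ₗ[k] p × q where
  toFun x := (⟨x.1.1, x.2.1⟩, ⟨x.1.2, x.2.2⟩)
  invFun x := ⟨(x.1.1, x.2.1), x.1.2, x.2.2⟩
  map_add' _ _ := rfl
  map_smul' _ _ := rfl
  left_inv _ := rfl
  right_inv _ := rfl

theorem stmt_5 (k : Type*) [Field k]
    (A A' B B' C D : Type u)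
    [AddCommGroup A] [Module k A] [AddCommGroup A'] [Module k A']
    [AddCommGroup B] [Module k B] [AddCommGroup B'] [Module k B']
    [AddCommGroup C] [Module k C] [AddCommGroup D] [Module k D]
    (φ : A →ₗ[k] A') (ψ : B →ₗ[k] B')
    (αb : A →ₗ[k] C) (βb : B →ₗ[k] C)
    (αd : A' →ₗ[k] D) (βd : B' →ₗ[k] D)
    (ζ : C →ₗ[k] D)
    (hcomm : ζ.comp (LinearMap.coprod αb βb) =
      (LinearMap.coprod αd βd).comp (LinearMap.prodMap φ ψ))
    (hinj : Function.Injective (LinearMap.coprod αd βd)) :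
    LinearMap.rank φ + LinearMap.rank ψ ≤ LinearMap.rank ζ := by
  have hrange : LinearMap.range (LinearMap.prodMap φ ψ)
      = (LinearMap.range φ).prod (LinearMap.range ψ) := by
    ext ⟨x, y⟩
    simp only [LinearMap.mem_range, Submodule.mem_prod, LinearMap.prodMap_apply, Prod.ext_iff,
      Prod.exists]
    constructor
    · rintro ⟨a, b, h1, h2⟩; exact ⟨⟨a, h1⟩, ⟨b, h2⟩⟩
    · rintro ⟨⟨a, h1⟩, ⟨b, h2⟩⟩; exact ⟨a, b, h1, h2⟩
  -- rank of prodMap equals rank φ + rank ψ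
  have h1 : LinearMap.rank (LinearMap.prodMap φ ψ) = LinearMap.rank φ + LinearMap.rank ψ := by
    rw [LinearMap.rank, hrange,
      (submoduleProdEquiv (LinearMap.range φ) (LinearMap.range ψ)).rank_eq, rank_prod']
  -- rank of injective ∘ f equals rank f
  have h2 : LinearMap.rank ((LinearMap.coprod αd βd).comp (LinearMap.prodMap φ ψ))
      = LinearMap.rank (LinearMap.prodMap φ ψ) := by
    rw [LinearMap.rank, LinearMap.range_comp, LinearMap.rank]
    exact (Submodule.equivMapOfInjective _ hinj _).rank_eq.symm
  calc LinearMap.rank φ + LinearMap.rank ψ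
      = LinearMap.rank ((LinearMap.coprod αd βd).comp (LinearMap.prodMap φ ψ)) := by
        rw [h2, h1]
    _ = LinearMap.rank (ζ.comp (LinearMap.coprod αb βb)) := by rw [hcomm]
    _ ≤ LinearMap.rank ζ := LinearMap.rank_comp_le_left _ _
end
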